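/- Let G be a finite simple graph with tw(G) ≥ 3, let v be a vertex of G of degree at most 2 with at least one neighbour u, and let G' be the simple graph obtained from G by contracting v into u (identifying v with u and removing any resulting parallel edges and loops). Then tw(G') = tw(G). -/

import Mathlib

open SimpleGraph

/-- `(T, β)` is a tree decomposition of the graph `G`: `T` is a tree, every vertex of `G`
is in some bag, both endpoints of every edge of `G` lie in a common bag, and for every
vertex of `G` the set of nodes of `T` whose bag contains it induces a connected subtree. -/
def IsTreeDecomposition {V ι : Type} (G : SimpleGraph V) (T : SimpleGraph ι)
    (β : ι → Set V) : Prop :=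
  T.IsTree ∧
  (∀ v : V, ∃ x : ι, v ∈ β x) ∧
  (∀ ⦃u v : V⦄, G.Adj u v → ∃ x : ι, u ∈ β x ∧ v ∈ β x) ∧
  (∀ v : V, (T.induce {x : ι | v ∈ β x}).Connected)

/-- The width of a decomposition with bags `β`: the maximum of `|β x| - 1` over all nodes. -/
noncomputable def decompWidth {V ι : Type} (β : ι → Set V) : ℕ :=
  ⨆ x : ι, ((β x).ncard - 1)

/-- The treewidth of `G`: the minimum width of a tree decomposition of `G`. -/
noncomputable def treewidth {V : Type} (G : SimpleGraph V) : ℕ :=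
  sInf { k : ℕ | ∃ (ι : Type) (T : SimpleGraph ι) (β : ι → Set V),
    IsTreeDecomposition G T β ∧ decompWidth β = k }

/-- A path decomposition of `G` with bags `β p_1, …, β p_r`: every vertex is in some bag,
both endpoints of every edge lie in a common bag, and the bags containing a fixed vertex
form a contiguous interval. -/
def IsPathDecomposition {V : Type} (G : SimpleGraph V) (r : ℕ) (β : Fin r → Set V) : Prop :=
  (∀ v : V, ∃ x : Fin r, v ∈ β x) ∧
  (∀ ⦃u v : V⦄, G.Adj u v → ∃ x : Fin r, u ∈ β x ∧ v ∈ β x) ∧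
  (∀ (v : V) (i j k : Fin r), i ≤ j → j ≤ k → v ∈ β i → v ∈ β k → v ∈ β j)

/-- The pathwidth of `G`: the minimum width of a path decomposition of `G`. -/
noncomputable def pathwidth {V : Type} (G : SimpleGraph V) : ℕ :=
  sInf { k : ℕ | ∃ (r : ℕ) (β : Fin (r + 1) → Set V),
    IsPathDecomposition G (r + 1) β ∧ decompWidth β = k }

/-- The graph obtained from `G` by contracting the vertex `v` into the vertex `u`:
the vertex `v` is removed, and `u` becomes additionally adjacent to all former
neighbours of `v` (other than `u` itself); parallel edges and loops are suppressed. -/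
def contractInto {V : Type} (G : SimpleGraph V) (v u : V) :
    SimpleGraph {x : V // x ≠ v} :=
  SimpleGraph.fromRel (fun a b =>
    G.Adj a.val b.val ∨ ((a.val = u) ∧ G.Adj v b.val))

/-!
Contracting an edge never increases treewidth: pushing every bag forward along the map
`v ↦ u`, the bags that contain `u` afterwards are those that contained `u` or `v` before, a
union of two subtrees which meet because `u` and `v` are adjacent.

Conversely, as `deg v ≤ 2` we have `N(v) ⊆ {u, w}` for some `w`, and `u`, `w` are equal or
adjacent after the contraction, so an optimal tree decomposition of the contracted graph has a
bag containing `N(v)`. Attaching to it a new leaf with bag `{v} ∪ N(v)` yields a tree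
decomposition of `G` of width at most `max (tw G') 2`, and `tw G ≥ 3` rules out the `2`.
-/

variable {V W ι : Type}

lemma decompWidth_le {β : ι → Set V} {k : ℕ} (h : ∀ x, (β x).ncard ≤ k + 1) :
    decompWidth β ≤ k :=
  ciSup_le' fun x => by have := h x; omega

lemma ncard_le_decompWidth_add_one [Finite V] (β : ι → Set V) (x : ι) :
    (β x).ncard ≤ decompWidth β + 1 := by
  have hbdd : BddAbove (Set.range fun x => (β x).ncard - 1) :=
    ⟨Nat.card V, by rintro _ ⟨x, rfl⟩; exact (Nat.sub_le _ _).trans (Set.ncard_le_card _)⟩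
  have := le_ciSup hbdd x
  unfold decompWidth
  omega

lemma treewidth_le_decompWidth {G : SimpleGraph V} {T : SimpleGraph ι} {β : ι → Set V}
    (h : IsTreeDecomposition G T β) : treewidth G ≤ decompWidth β :=
  Nat.sInf_le ⟨ι, T, β, h, rfl⟩

lemma isTreeDecomposition_univ (G : SimpleGraph V) :
    IsTreeDecomposition G (⊥ : SimpleGraph Unit) fun _ => Set.univ := by
  refine ⟨.of_subsingleton, fun _ => ⟨(), trivial⟩, fun _ _ _ => ⟨(), trivial, trivial⟩,
    fun _ => @Connected.of_subsingleton _ _ ⟨⟨(), trivial⟩⟩ _⟩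

lemma exists_isTreeDecomposition_decompWidth_eq_treewidth (G : SimpleGraph V) :
    ∃ (ι : Type) (T : SimpleGraph ι) (β : ι → Set V),
      IsTreeDecomposition G T β ∧ decompWidth β = treewidth G := by
  have hne : {k | ∃ (ι : Type) (T : SimpleGraph ι) (β : ι → Set V),
      IsTreeDecomposition G T β ∧ decompWidth β = k}.Nonempty :=
    ⟨_, Unit, ⊥, _, isTreeDecomposition_univ G, rfl⟩
  exact Nat.sInf_mem hne

lemma SimpleGraph.Connected.induce_image {G : SimpleGraph V} {H : SimpleGraph W} (φ : G →g H)
    {s : Set V} (h : (G.induce s).Connected) : (H.induce (φ '' s)).Connected :=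
  h.map (induceHom φ (Set.mapsTo_image φ s)) (by rintro ⟨_, x, hx, rfl⟩; exact ⟨⟨x, hx⟩, rfl⟩)

/-- A cycle of `G.map f` lives on `Set.range f`, where `G.map f` is a copy of `G`. -/
lemma SimpleGraph.IsAcyclic.map {G : SimpleGraph V} (f : V ↪ W) (h : G.IsAcyclic) :
    (G.map f).IsAcyclic := by
  classical
  intro w c hc
  have hrange : ∀ x ∈ c.support, x ∈ Set.range f := by
    intro x hx
    obtain ⟨a, -, -, ha, -⟩ := (map_adj f G _ _).mp (Walk.adj_snd (hc.rotate hx).not_nil)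
    exact ⟨a, ha⟩
  have hc' : (c.induce _ hrange).IsCycle := by
    rw [← Walk.isCycle_map_iff_of_injective
      (f := (Embedding.induce (G := G.map f) (Set.range f)).toHom) Subtype.val_injective,
      Walk.map_induce]
    exact hc
  exact ((Embedding.map f G).isoInduceRange.isAcyclic_iff.mp h) _ hc'

namespace IsTreeDecomposition

variable {G : SimpleGraph V} {T : SimpleGraph ι} {β : ι → Set V}

lemma exists_mem_mem (h : IsTreeDecomposition G T β) {a b : V} (hab : a = b ∨ G.Adj a b) :
    ∃ x, a ∈ β x ∧ b ∈ β x := by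
  rcases hab with rfl | hab
  · obtain ⟨x, hx⟩ := h.2.1 a
    exact ⟨x, hx, hx⟩
  · exact h.2.2.1 hab

/-- The fibres of `f` are cliques of `G`, so the subtrees of the vertices of a fibre pairwise
meet and their union is again a subtree. -/
lemma image (h : IsTreeDecomposition G T β) {H : SimpleGraph W} {f : V → W}
    (hf : Function.Surjective f)
    (hlift : ∀ ⦃a b⦄, H.Adj a b → ∃ a' b', f a' = a ∧ f b' = b ∧ G.Adj a' b')
    (hfibre : ∀ ⦃a b⦄, f a = f b → a = b ∨ G.Adj a b) :
    IsTreeDecomposition H T fun x => f '' β x := by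
  have ⟨hT, hcover, hedge, hconn⟩ := h
  refine ⟨hT, fun a => ?_, fun a b hab => ?_, fun a => ?_⟩
  · obtain ⟨a', rfl⟩ := hf a
    obtain ⟨x, hx⟩ := hcover a'
    exact ⟨x, Set.mem_image_of_mem f hx⟩
  · obtain ⟨a', b', rfl, rfl, hab'⟩ := hlift hab
    obtain ⟨x, ha, hb⟩ := hedge hab'
    exact ⟨x, Set.mem_image_of_mem f ha, Set.mem_image_of_mem f hb⟩
  · have hset : {x | a ∈ f '' β x} = ⋃₀ ((fun a' => {x | a' ∈ β x}) '' (f ⁻¹' {a})) := by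
      ext x
      simp [and_comm]
    rw [hset]
    refine induce_sUnion_connected_of_pairwise_not_disjoint ?_ ?_ ?_
    · obtain ⟨a', ha'⟩ := hf a
      exact ⟨_, a', ha', rfl⟩
    · rintro _ _ ⟨a', ha', rfl⟩ ⟨b', hb', rfl⟩
      exact h.exists_mem_mem (hfibre (ha'.trans hb'.symm))
    · rintro _ ⟨a', -, rfl⟩
      exact hconn a'

end IsTreeDecomposition

lemma decompWidth_image_le [Finite V] (f : V → W) (β : ι → Set V) :
    decompWidth (fun x => f '' β x) ≤ decompWidth β :=
  decompWidth_le fun x =>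
    (Set.ncard_image_le (β x).toFinite).trans (ncard_le_decompWidth_add_one β x)

lemma treewidth_le_of_surjective [Finite V] {G : SimpleGraph V} {H : SimpleGraph W} {f : V → W}
    (hf : Function.Surjective f)
    (hlift : ∀ ⦃a b⦄, H.Adj a b → ∃ a' b', f a' = a ∧ f b' = b ∧ G.Adj a' b')
    (hfibre : ∀ ⦃a b⦄, f a = f b → a = b ∨ G.Adj a b) :
    treewidth H ≤ treewidth G := by
  obtain ⟨ι, T, β, h, hw⟩ := exists_isTreeDecomposition_decompWidth_eq_treewidth G
  calc treewidth H ≤ decompWidth fun x => f '' β x :=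
        treewidth_le_decompWidth (h.image hf hlift hfibre)
    _ ≤ decompWidth β := decompWidth_image_le f β
    _ = treewidth G := hw

section contractInto

variable {G : SimpleGraph V} {v u : V}

lemma contractInto_adj {a b : {x // x ≠ v}} :
    (contractInto G v u).Adj a b ↔ a ≠ b ∧
      ((G.Adj a b ∨ a.1 = u ∧ G.Adj v b) ∨ (G.Adj b a ∨ b.1 = u ∧ G.Adj v a)) :=
  fromRel_adj ..

def contractMap [DecidableEq V] (hu : u ≠ v) (z : V) : {x // x ≠ v} :=
  if h : z = v then ⟨u, hu⟩ else ⟨z, h⟩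

lemma treewidth_contractInto_le [Finite V] (hadj : G.Adj v u) :
    treewidth (contractInto G v u) ≤ treewidth G := by
  classical
  have hval (a : {x // x ≠ v}) : contractMap hadj.ne' a.1 = a := dif_neg a.2
  have hv (a : {x // x ≠ v}) (ha : a.1 = u) : contractMap hadj.ne' v = a :=
    (dif_pos rfl).trans (Subtype.ext ha.symm)
  refine treewidth_le_of_surjective (f := contractMap hadj.ne') (fun a => ⟨a, hval a⟩) ?_ ?_
  · intro a b hab
    rcases (contractInto_adj.mp hab).2 with (h | ⟨ha, h⟩) | (h | ⟨hb, h⟩)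
    · exact ⟨a, b, hval a, hval b, h⟩
    · exact ⟨v, b, hv a ha, hval b, h⟩
    · exact ⟨a, b, hval a, hval b, h.symm⟩
    · exact ⟨a, v, hval a, hv b hb, h.symm⟩
  · intro a b hab
    unfold contractMap at hab
    split_ifs at hab with ha hb hb <;> simp only [Subtype.mk.injEq] at hab <;> subst_vars
    all_goals simp [hadj, hadj.symm]

end contractInto

def addLeaf (T : SimpleGraph ι) (x₀ : ι) : SimpleGraph (Option ι) :=
  T.map .some ⊔ edge none (some x₀)

section addLeaf

variable {T : SimpleGraph ι} {x₀ : ι}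

lemma isTree_addLeaf (hT : T.IsTree) (x₀ : ι) : (addLeaf T x₀).IsTree := by
  refine ⟨⟨fun x y => ?_⟩, ?_⟩
  · have hreach : ∀ y, (addLeaf T x₀).Reachable y (some x₀) := by
      rintro (_ | x)
      · exact Adj.reachable (by simp [addLeaf, edge_adj])
      · exact ((hT.1.preconnected x x₀).map (Embedding.map .some T).toHom).mono le_sup_left
    exact (hreach x).trans (hreach y).symm
  · refine (hT.isAcyclic.map Function.Embedding.some).sup_edge_of_not_reachable ?_
    rintro ⟨_ | ⟨h, -⟩⟩
    obtain ⟨_, _, -, h, -⟩ := (map_adj _ _ _ _).mp h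
    simp at h

lemma connected_induce_addLeaf_image_some {S : Set ι} (hS : (T.induce S).Connected) :
    ((addLeaf T x₀).induce (some '' S)).Connected :=
  hS.induce_image ((Hom.ofLE le_sup_left).comp (Embedding.map .some T).toHom)

lemma connected_induce_addLeaf_insert_none {S : Set ι} (hS : (T.induce S).Connected)
    (hx₀ : x₀ ∈ S) : ((addLeaf T x₀).induce (insert none (some '' S))).Connected := by
  rw [Set.insert_eq]
  exact connected_induce_union (by simp [induce_singleton_eq_top, connected_top.preconnected])
    (connected_induce_addLeaf_image_some hS).preconnected (Set.mem_singleton none)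
    (Set.mem_image_of_mem some hx₀) (by simp [addLeaf, edge_adj])

end addLeaf

def leafBags (G : SimpleGraph V) (v : V) (β : ι → Set {x // x ≠ v}) : Option ι → Set V
  | none => insert v (G.neighborSet v)
  | some x => Subtype.val '' β x

lemma isTreeDecomposition_addLeaf {G : SimpleGraph V} {v : V} {H : SimpleGraph {x // x ≠ v}}
    {T : SimpleGraph ι} {β : ι → Set {x // x ≠ v}} (h : IsTreeDecomposition H T β)
    (hGH : ∀ a b : {x // x ≠ v}, G.Adj a b → H.Adj a b) {x₀ : ι}
    (hx₀ : ∀ a : {x // x ≠ v}, G.Adj v a → a ∈ β x₀) :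
    IsTreeDecomposition G (addLeaf T x₀) (leafBags G v β) := by
  have ⟨hT, hcover, hedge, hconn⟩ := h
  refine ⟨isTree_addLeaf hT x₀, fun a => ?_, fun a b hab => ?_, fun a => ?_⟩
  · by_cases ha : a = v
    · exact ⟨none, by simp [leafBags, ha]⟩
    · obtain ⟨x, hx⟩ := hcover ⟨a, ha⟩
      exact ⟨some x, ⟨a, ha⟩, hx, rfl⟩
  · by_cases ha : a = v
    · subst ha
      exact ⟨none, by simp [leafBags], by simp [leafBags, hab]⟩
    by_cases hb : b = v
    · subst hb
      exact ⟨none, by simp [leafBags, hab.symm], by simp [leafBags]⟩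
    obtain ⟨x, hxa, hxb⟩ := hedge (hGH ⟨a, ha⟩ ⟨b, hb⟩ hab)
    exact ⟨some x, ⟨_, hxa, rfl⟩, ⟨_, hxb, rfl⟩⟩
  · by_cases ha : a = v
    · subst ha
      have hset : {o | a ∈ leafBags G a β o} = {none} := by
        ext (_ | x) <;> simp [leafBags]
      rw [hset, induce_singleton_eq_top]
      exact connected_top
    by_cases hva : G.Adj v a
    · have hset : {o | a ∈ leafBags G v β o} = insert none (some '' {x | ⟨a, ha⟩ ∈ β x}) := by
        ext (_ | x) <;> simp [leafBags, ha, hva]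
      rw [hset]
      exact connected_induce_addLeaf_insert_none (hconn ⟨a, ha⟩) (hx₀ ⟨a, ha⟩ hva)
    · have hset : {o | a ∈ leafBags G v β o} = some '' {x | ⟨a, ha⟩ ∈ β x} := by
        ext (_ | x) <;> simp [leafBags, ha, hva]
      rw [hset]
      exact connected_induce_addLeaf_image_some (hconn ⟨a, ha⟩)

lemma treewidth_le_max_decompWidth_degree [Fintype V] {G : SimpleGraph V} [DecidableRel G.Adj]
    {v : V} {H : SimpleGraph {x // x ≠ v}} {T : SimpleGraph ι} {β : ι → Set {x // x ≠ v}}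
    (h : IsTreeDecomposition H T β) (hGH : ∀ a b : {x // x ≠ v}, G.Adj a b → H.Adj a b)
    {x₀ : ι} (hx₀ : ∀ a : {x // x ≠ v}, G.Adj v a → a ∈ β x₀) :
    treewidth G ≤ max (decompWidth β) (G.degree v) := by
  refine (treewidth_le_decompWidth (isTreeDecomposition_addLeaf h hGH hx₀)).trans
    (decompWidth_le fun o => ?_)
  cases o with
  | none =>
    have hdeg : (G.neighborSet v).ncard = G.degree v := by
      rw [← Nat.card_coe_set_eq, Nat.card_eq_fintype_card, card_neighborSet_eq_degree]
    simp only [leafBags, Set.ncard_insert_of_notMem (notMem_neighborSet_self G), hdeg]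
    omega
  | some x =>
    simp only [leafBags, Set.ncard_image_of_injective _ Subtype.val_injective]
    have := ncard_le_decompWidth_add_one β x
    omega

lemma exists_adj_forall_adj_eq_or_eq [Fintype V] {G : SimpleGraph V} [DecidableRel G.Adj]
    {v u : V} (hadj : G.Adj v u) (hdeg : G.degree v ≤ 2) :
    ∃ w, G.Adj v w ∧ ∀ y, G.Adj v y → y = u ∨ y = w := by
  classical
  by_cases hw : ∃ w, G.Adj v w ∧ w ≠ u
  · obtain ⟨w, hvw, hwu⟩ := hw
    refine ⟨w, hvw, fun y hvy => ?_⟩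
    by_contra! hy
    have hsub : ({u, w, y} : Finset V) ⊆ G.neighborFinset v := by
      simp [Finset.insert_subset_iff, hadj, hvw, hvy]
    have := (Finset.card_le_card hsub).trans_eq (card_neighborFinset_eq_degree G v)
    rw [Finset.card_eq_three.mpr ⟨u, w, y, hwu.symm, hy.1.symm, hy.2.symm, rfl⟩] at this
    omega
  · push Not at hw
    exact ⟨u, hadj, fun y hy => .inl (hw y hy)⟩

lemma treewidth_le_max_treewidth_contractInto [Fintype V] {G : SimpleGraph V}
    [DecidableRel G.Adj] {v u : V} (hadj : G.Adj v u) (hdeg : G.degree v ≤ 2) :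
    treewidth G ≤ max (treewidth (contractInto G v u)) 2 := by
  obtain ⟨ι, T, β, h, hw⟩ := exists_isTreeDecomposition_decompWidth_eq_treewidth
    (contractInto G v u)
  obtain ⟨w, hvw, hN⟩ := exists_adj_forall_adj_eq_or_eq hadj hdeg
  have huw : (⟨u, hadj.ne'⟩ : {x // x ≠ v}) = ⟨w, hvw.ne'⟩ ∨
      (contractInto G v u).Adj ⟨u, hadj.ne'⟩ ⟨w, hvw.ne'⟩ := by
    by_cases huw : u = w
    · exact .inl (Subtype.ext huw)
    · exact .inr (contractInto_adj.mpr ⟨by simpa using huw, .inl (.inr ⟨rfl, hvw⟩)⟩)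
  obtain ⟨x₀, hu, hw'⟩ := h.exists_mem_mem huw
  have hx₀ (a : {x // x ≠ v}) (ha : G.Adj v a) : a ∈ β x₀ := by
    rcases hN a ha with hau | haw
    · exact (Subtype.ext hau : a = ⟨u, hadj.ne'⟩) ▸ hu
    · exact (Subtype.ext haw : a = ⟨w, hvw.ne'⟩) ▸ hw'
  have hGH (a b : {x // x ≠ v}) (hab : G.Adj a b) : (contractInto G v u).Adj a b :=
    contractInto_adj.mpr ⟨ne_of_apply_ne Subtype.val hab.ne, .inl (.inl hab)⟩
  calc treewidth G ≤ max (decompWidth β) (G.degree v) :=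
        treewidth_le_max_decompWidth_degree h hGH hx₀
    _ ≤ max (treewidth (contractInto G v u)) 2 := hw ▸ max_le_max le_rfl hdeg

theorem treewidth_contract_low_degree_general {V : Type} [Fintype V]
    (G : SimpleGraph V) [DecidableRel G.Adj]
    (htw : 3 ≤ treewidth G) (v u : V) (hadj : G.Adj v u) (hdeg : G.degree v ≤ 2) :
    treewidth (contractInto G v u) = treewidth G := by
  have hle := treewidth_contractInto_le hadj
  have hge := treewidth_le_max_treewidth_contractInto hadj hdeg
  omega

/-- If `G` has treewidth at least `3` and `v` is a vertex of degree at most `2` having a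
neighbour `u`, then contracting `v` into `u` does not change the treewidth. -/
theorem treewidth_contract_low_degree {V : Type} [Fintype V] [DecidableEq V]
    (G : SimpleGraph V) [DecidableRel G.Adj]
    (htw : 3 ≤ treewidth G) (v u : V) (hadj : G.Adj v u) (hdeg : G.degree v ≤ 2) :
    treewidth (contractInto G v u) = treewidth G :=
  treewidth_contract_low_degree_general G htw v u hadj hdeg
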